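/- Let k be a field of characteristic zero with absolute Galois group Γ_k, E an elliptic curve over k with full torsion Galois representation ρ: Γ_k → GL₂(ẑ) satisfying SL₂⁺(ẑ) ⊆ ρ(Γ_k). Let k^cyc be the field obtained by adjoining all roots of unity, and let K be any intermediate field k ⊆ K ⊆ k^cyc. Then SL₂⁺(ẑ) ⊆ ρ(Γ_K); in particular SL₂⁺(ℤ/n) ⊆ ρ_n(Γ_K) for every positive integer n. -/

import Mathlib

/-!
If `ρ(γ) ∈ SL₂(ẑ)`, then the cyclotomic character `det ρ(γ)` is trivial, so `γ` fixes every
root of unity, hence `k^cyc` and every `K ⊆ k^cyc`: the elements of `Γ_k` realising `SL₂⁺(ẑ)`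
already lie in `Γ_K`. For a finite level `n`, an element of `SL₂⁺(ℤ/n)` is the reduction of some
`M ∈ SL₂(ℤ)` whose reductions all lie in `SL₂⁺`; for odd `n` this needs `M ≡ 1 mod 2`. Such
lifts exist because every element of `SL₂(ℤ/n)` is a product of elementary matrices, and the
entries of these lift to integers divisible by any `d` prime to `n`.
-/
set_option synthInstance.maxHeartbeats 1000000
open Matrix

instance slSMul (n : ℕ) : SMul (SpecialLinearGroup (Fin 2) (ZMod n)) (Fin 2 → ZMod n) :=
  ⟨fun g v => (g : Matrix (Fin 2) (Fin 2) (ZMod n)).mulVec v⟩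

lemma slAct_def {n : ℕ} (g : SpecialLinearGroup (Fin 2) (ZMod n)) (v : Fin 2 → ZMod n) :
    g • v = (g : Matrix (Fin 2) (Fin 2) (ZMod n)).mulVec v := rfl

/-- The tautological action of `SL₂(ℤ/n)` on `(ℤ/n)²`. -/
instance slAct (n : ℕ) : DistribMulAction (SpecialLinearGroup (Fin 2) (ZMod n)) (Fin 2 → ZMod n) where
  one_smul v := by rw [slAct_def]; simp
  mul_smul g h v := by rw [slAct_def, slAct_def, slAct_def]; rw [Matrix.SpecialLinearGroup.coe_mul, Matrix.mulVec_mulVec]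
  smul_zero g := Matrix.mulVec_zero _
  smul_add g x y := Matrix.mulVec_add _ x y

/-- The action of `SL₂(ℤ/2)` on the three nonzero vectors of `(ℤ/2)²`. -/
instance nzAct : MulAction (SpecialLinearGroup (Fin 2) (ZMod 2)) {v : Fin 2 → ZMod 2 // v ≠ 0} where
  smul g v := ⟨g • (v : Fin 2 → ZMod 2), fun h => v.2 (by
    have := congrArg (fun w => g⁻¹ • w) h
    simpa [smul_smul] using this)⟩
  one_smul v := Subtype.ext (one_smul _ (v : Fin 2 → ZMod 2))
  mul_smul g h v := Subtype.ext (mul_smul g h (v : Fin 2 → ZMod 2))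

/-- The sign character of `SL₂(ℤ/2) ≅ S₃`, via the permutation action on
the three nonzero vectors of `(ℤ/2)²`. -/
noncomputable def signChar : SpecialLinearGroup (Fin 2) (ZMod 2) →* ℤˣ :=
  Equiv.Perm.sign.comp
    (MulAction.toPermHom (SpecialLinearGroup (Fin 2) (ZMod 2)) {v : Fin 2 → ZMod 2 // v ≠ 0})

/-- `SL₂⁺(ℤ/n)`: all of `SL₂(ℤ/n)` for odd `n`; for even `n` the kernel of the composition of
reduction mod 2 with the sign character `SL₂(ℤ/2) ≅ S₃ → {±1}`. -/
noncomputable def SL2Plus (n : ℕ) : Subgroup (SpecialLinearGroup (Fin 2) (ZMod n)) :=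
  if h : 2 ∣ n then
    (signChar.comp (SpecialLinearGroup.map (ZMod.castHom h (ZMod 2)))).ker
  else ⊤
set_option maxHeartbeats 1000000
open WeierstrassCurve WeierstrassCurve.Affine
open scoped Classical

/-- The `n`-torsion subgroup of an abelian group. -/
def torsionSub (A : Type*) [AddCommGroup A] (n : ℕ) : AddSubgroup A where
  carrier := {x | n • x = 0}
  zero_mem' := by simp
  add_mem' := by
    intro a b ha hb
    simp only [Set.mem_setOf_eq, smul_add] at *
    rw [ha, hb, add_zero]
  neg_mem' := by
    intro a ha
    simp only [Set.mem_setOf_eq, smul_neg] at *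
    rw [ha, neg_zero]

variable {k : Type*} [Field k] {K : Type*} [Field K] [Algebra k K]

/-- The action of a `k`-automorphism `σ` of `K` on the `K`-points of a Weierstrass curve `W`
defined over `k`. -/
noncomputable def galHom (W : WeierstrassCurve k) (σ : K ≃ₐ[k] K) : (W.baseChange K).toAffine.Point →+ (W.baseChange K).toAffine.Point :=
  WeierstrassCurve.Affine.Point.map (W' := W) σ.toAlgHom

/-- The Galois action preserves `n`-torsion. -/
noncomputable def torsionGal (W : WeierstrassCurve k) (σ : K ≃ₐ[k] K) (n : ℕ)
    (P : torsionSub ((W.baseChange K).toAffine.Point) n) : torsionSub ((W.baseChange K).toAffine.Point) n :=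
  ⟨galHom W σ P.1, by
    have h : n • (P : (W.baseChange K).toAffine.Point) = 0 := P.2
    show n • galHom W σ P.1 = 0
    rw [← map_nsmul, h, map_zero]⟩

/-- Dividing torsion levels: for `m ∣ n`, multiplication by `n/m` maps `n`-torsion to
`m`-torsion. -/
def torsionMul {A : Type*} [AddCommGroup A] {m n : ℕ} (h : m ∣ n) (P : torsionSub A n) :
    torsionSub A m :=
  ⟨(n / m) • P.1, by
    show m • (n / m) • (P : A) = 0
    rw [smul_smul, Nat.mul_div_cancel' h]
    exact P.2⟩

lemma Nat.exists_coprime_add_mul {a c n : ℕ} (hn : n ≠ 0) (h : Nat.Coprime (Nat.gcd a c) n) :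
    ∃ x : ℕ, Nat.Coprime (c + x * a) n := by
  refine ⟨∏ p ∈ n.primeFactors with ¬ p ∣ c, p,
    Nat.coprime_of_dvd fun p hp hpcx hpn => ?_⟩
  by_cases hpc : p ∣ c
  · have hpa : p ∣ a := by
      have hpxa := (Nat.dvd_add_right hpc).mp hpcx
      refine (hp.dvd_mul.mp hpxa).resolve_left fun hpx => ?_
      obtain ⟨q, hq, hpq⟩ := (hp.prime.dvd_finsetProd_iff _).mp hpx
      rw [Finset.mem_filter, Nat.mem_primeFactors,
        ← (Nat.prime_dvd_prime_iff_eq hp hq.1.1).mp hpq] at hq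
      exact hq.2 hpc
    exact hp.ne_one (Nat.eq_one_of_dvd_coprimes h (Nat.dvd_gcd hpa hpc) hpn)
  · have hpx : p ∣ ∏ p ∈ n.primeFactors with ¬ p ∣ c, p :=
      Finset.dvd_prod_of_mem _ (by simp [hp, hpn, hn, hpc])
    exact hpc ((Nat.dvd_add_left (hpx.mul_right a)).mp hpcx)

lemma ZMod.exists_isUnit_add_mul {N : ℕ} [NeZero N] {a c : ZMod N} (h : IsCoprime a c) :
    ∃ x : ZMod N, IsUnit (c + x * a) := by
  have hg : Nat.Coprime (Nat.gcd a.val c.val) N := by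
    set g := Nat.gcd (Nat.gcd a.val c.val) N
    have hga : (g : ZMod N) ∣ a := by
      simpa using Nat.cast_dvd_cast (α := ZMod N) (show g ∣ a.val from
        (Nat.gcd_dvd_left _ _).trans (Nat.gcd_dvd_left _ _))
    have hgc : (g : ZMod N) ∣ c := by
      simpa using Nat.cast_dvd_cast (α := ZMod N) (show g ∣ c.val from
        (Nat.gcd_dvd_left _ _).trans (Nat.gcd_dvd_right _ _))
    obtain ⟨u, v, huv⟩ := h
    have hunit : IsUnit (g : ZMod N) :=
      isUnit_of_dvd_one (huv ▸ dvd_add (hga.mul_left u) (hgc.mul_left v))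
    exact Nat.Coprime.eq_one_of_dvd ((ZMod.isUnit_iff_coprime g N).mp hunit) (Nat.gcd_dvd_right _ _)
  obtain ⟨x, hx⟩ := Nat.exists_coprime_add_mul (NeZero.ne N) hg
  refine ⟨x, ?_⟩
  simpa using (ZMod.isUnit_iff_coprime _ N).mpr hx

namespace Matrix.SpecialLinearGroup

variable {R S : Type*} [CommRing R] [CommRing S]

def upperTransvection (z : R) : SpecialLinearGroup (Fin 2) R :=
  ⟨!![1, z; 0, 1], by simp [det_fin_two_of]⟩

def lowerTransvection (z : R) : SpecialLinearGroup (Fin 2) R :=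
  ⟨!![1, 0; z, 1], by simp [det_fin_two_of]⟩

@[simp]
lemma upperTransvection_zero : upperTransvection (0 : R) = 1 := by
  ext i j; fin_cases i <;> fin_cases j <;> rfl

@[simp]
lemma lowerTransvection_zero : lowerTransvection (0 : R) = 1 := by
  ext i j; fin_cases i <;> fin_cases j <;> rfl

@[simp]
lemma map_upperTransvection (f : R →+* S) (z : R) :
    map f (upperTransvection z) = upperTransvection (f z) := by
  ext i j
  rw [map_apply_coe]
  fin_cases i <;> fin_cases j <;> simp [upperTransvection]

@[simp]
lemma map_lowerTransvection (f : R →+* S) (z : R) :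
    map f (lowerTransvection z) = lowerTransvection (f z) := by
  ext i j
  rw [map_apply_coe]
  fin_cases i <;> fin_cases j <;> simp [lowerTransvection]

lemma isCoprime_apply_zero_zero_apply_one_zero (A : SpecialLinearGroup (Fin 2) R) :
    IsCoprime (A 0 0) (A 1 0) :=
  ⟨A 1 1, -A 0 1, by
    linear_combination (det_fin_two (A : Matrix (Fin 2) (Fin 2) R)).symm.trans A.2⟩

section Transvections

variable {H : Subgroup (SpecialLinearGroup (Fin 2) R)}
  (hU : ∀ z, upperTransvection z ∈ H) (hL : ∀ z, lowerTransvection z ∈ H)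
include hU hL

lemma mem_of_isUnit_apply_one_zero {A : SpecialLinearGroup (Fin 2) R} (hc : IsUnit (A 1 0)) :
    A ∈ H := by
  obtain ⟨u, hu⟩ := hc
  have hdet : A 0 0 * A 1 1 - A 0 1 * A 1 0 = 1 := by rw [← det_fin_two]; exact A.2
  have hcu : A 1 0 * ↑u⁻¹ = 1 := by rw [← hu, Units.mul_inv]
  have hA : A = upperTransvection ((A 0 0 - 1) * ↑u⁻¹) * lowerTransvection (A 1 0) *
      upperTransvection ((A 1 1 - 1) * ↑u⁻¹) := by
    ext i j
    rw [coe_mul, coe_mul]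
    fin_cases i <;> fin_cases j <;>
      simp [upperTransvection, lowerTransvection, Matrix.mul_apply, Fin.sum_univ_two]
    · linear_combination (1 - A 0 0) * hcu
    · linear_combination
        (-↑u⁻¹) * hdet + (-A 0 1 - (A 0 0 - 1) * (A 1 1 - 1) * ↑u⁻¹) * hcu
    · linear_combination (1 - A 1 1) * hcu
  rw [hA]
  exact H.mul_mem (H.mul_mem (hU _) (hL _)) (hU _)

lemma mem_of_isUnit_add_mul {A : SpecialLinearGroup (Fin 2) R} {x : R}
    (hx : IsUnit (A 1 0 + x * A 0 0)) : A ∈ H := by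
  have hxA : lowerTransvection x * A ∈ H := by
    refine mem_of_isUnit_apply_one_zero hU hL ?_
    rw [coe_mul]
    simpa [lowerTransvection, Matrix.mul_apply, Fin.sum_univ_two, add_comm] using hx
  simpa using H.mul_mem (H.inv_mem (hL x)) hxA

end Transvections

theorem mem_map_Gamma_of_coprime {N d : ℕ} [NeZero N] (hd : d.Coprime N)
    (A : SpecialLinearGroup (Fin 2) (ZMod N)) :
    A ∈ (CongruenceSubgroup.Gamma d).map (map (Int.castRingHom (ZMod N))) := by
  have hlift (z : ZMod N) : ∃ t : ℤ, ((d * t : ℤ) : ZMod N) = z :=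
    ⟨((d : ZMod N)⁻¹ * z).val, by
      push_cast
      rw [ZMod.natCast_zmod_val, ← mul_assoc, ZMod.coe_mul_inv_eq_one d hd, one_mul]⟩
  obtain ⟨x, hx⟩ := ZMod.exists_isUnit_add_mul (isCoprime_apply_zero_zero_apply_one_zero A)
  refine mem_of_isUnit_add_mul (fun z => ?_) (fun z => ?_) hx
  · obtain ⟨t, rfl⟩ := hlift z
    refine ⟨upperTransvection (d * t), ?_, by simp⟩
    rw [SetLike.mem_coe, CongruenceSubgroup.Gamma_mem', map_upperTransvection]
    simp
  · obtain ⟨t, rfl⟩ := hlift z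
    refine ⟨lowerTransvection (d * t), ?_, by simp⟩
    rw [SetLike.mem_coe, CongruenceSubgroup.Gamma_mem', map_lowerTransvection]
    simp

lemma map_castHom_map_intCast {m n : ℕ} (h : m ∣ n) (M : SpecialLinearGroup (Fin 2) ℤ) :
    map (ZMod.castHom h (ZMod m)) (map (Int.castRingHom (ZMod n)) M) =
      map (Int.castRingHom (ZMod m)) M := by
  ext i j
  simp [map_apply_coe]

end Matrix.SpecialLinearGroup

lemma map_intCast_mem_SL2Plus {M : SpecialLinearGroup (Fin 2) ℤ}
    (hM : signChar (SpecialLinearGroup.map (Int.castRingHom (ZMod 2)) M) = 1) (m : ℕ) :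
    SpecialLinearGroup.map (Int.castRingHom (ZMod m)) M ∈ SL2Plus m := by
  unfold SL2Plus
  split_ifs with h2
  · rwa [MonoidHom.mem_ker, MonoidHom.comp_apply, SpecialLinearGroup.map_castHom_map_intCast]
  · exact Subgroup.mem_top _

lemma exists_lift_signChar_eq_one {n : ℕ} (hn : 0 < n) {A : SpecialLinearGroup (Fin 2) (ZMod n)}
    (hA : A ∈ SL2Plus n) :
    ∃ M : SpecialLinearGroup (Fin 2) ℤ,
      SpecialLinearGroup.map (Int.castRingHom (ZMod n)) M = A ∧
        signChar (SpecialLinearGroup.map (Int.castRingHom (ZMod 2)) M) = 1 := by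
  have : NeZero n := ⟨hn.ne'⟩
  by_cases h2 : 2 ∣ n
  · obtain ⟨M, -, hM⟩ := SpecialLinearGroup.mem_map_Gamma_of_coprime (Nat.coprime_one_left n) A
    rw [SL2Plus, dif_pos h2, MonoidHom.mem_ker, MonoidHom.comp_apply, ← hM,
      SpecialLinearGroup.map_castHom_map_intCast] at hA
    exact ⟨M, hM, hA⟩
  · have h2n : Nat.Coprime 2 n := (Nat.Prime.coprime_iff_not_dvd Nat.prime_two).mpr h2
    obtain ⟨M, hM2, hM⟩ := SpecialLinearGroup.mem_map_Gamma_of_coprime h2n A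
    rw [SetLike.mem_coe, CongruenceSubgroup.Gamma_mem'] at hM2
    exact ⟨M, hM, by rw [hM2, map_one]⟩

lemma IntermediateField.mem_fixingSubgroup_adjoin {F E : Type*} [Field F] [Field E]
    [Algebra F E] {S : Set E} {σ : E ≃ₐ[F] E} (h : ∀ x ∈ S, σ x = x) :
    σ ∈ (adjoin F S).fixingSubgroup := by
  rw [← Subgroup.zpowers_le, ← IntermediateField.le_iff_le, IntermediateField.adjoin_le_iff]
  rintro x hx ⟨_, m, rfl⟩
  exact (MulAction.stabilizer (E ≃ₐ[F] E) x).zpow_mem (h x hx) m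

lemma IsPrimitiveRoot.pow_val_one {M : Type*} [CommMonoid M] {ζ : M} {n : ℕ}
    (h : IsPrimitiveRoot ζ n) : ζ ^ (1 : ZMod n).val = ζ := by
  rw [ZMod.val_one_eq_one_mod, h.eq_orderOf, pow_mod_orderOf, pow_one]

open Matrix in
theorem stmt_12_general {k : Type*} [Field k] (E : WeierstrassCurve k)
    (e : ∀ n : ℕ, 0 < n → (torsionSub ((E.baseChange (AlgebraicClosure k)).toAffine.Point) n ≃+ (Fin 2 → ZMod n)))
    (hρ : ∀ A : ∀ n : ℕ, 0 < n → SpecialLinearGroup (Fin 2) (ZMod n),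
      (∀ (m n : ℕ) (h : m ∣ n) (hm : 0 < m) (hn : 0 < n),
        SpecialLinearGroup.map (ZMod.castHom h (ZMod m)) (A n hn) = A m hm) →
      (∀ (n : ℕ) (hn : 0 < n), A n hn ∈ SL2Plus n) →
      ∃ γ : AlgebraicClosure k ≃ₐ[k] AlgebraicClosure k,
        ∀ (n : ℕ) (hn : 0 < n) (P : torsionSub ((E.baseChange (AlgebraicClosure k)).toAffine.Point) n),
          e n hn (torsionGal E γ n P) = A n hn • e n hn P)
    (hdet : ∀ (γ : AlgebraicClosure k ≃ₐ[k] AlgebraicClosure k) (n : ℕ) (hn : 0 < n)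
      (B : Matrix (Fin 2) (Fin 2) (ZMod n)),
      (∀ P : torsionSub ((E.baseChange (AlgebraicClosure k)).toAffine.Point) n,
        e n hn (torsionGal E γ n P) = B.mulVec (e n hn P)) →
      ∀ ζ : AlgebraicClosure k, IsPrimitiveRoot ζ n → γ ζ = ζ ^ B.det.val)
    (K : IntermediateField k (AlgebraicClosure k))
    (hK : K ≤ IntermediateField.adjoin k
      {x : AlgebraicClosure k | ∃ n : ℕ, 0 < n ∧ x ^ n = 1}) :
    (∀ A : ∀ n : ℕ, 0 < n → SpecialLinearGroup (Fin 2) (ZMod n),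
      (∀ (m n : ℕ) (h : m ∣ n) (hm : 0 < m) (hn : 0 < n),
        SpecialLinearGroup.map (ZMod.castHom h (ZMod m)) (A n hn) = A m hm) →
      (∀ (n : ℕ) (hn : 0 < n), A n hn ∈ SL2Plus n) →
      ∃ γ ∈ K.fixingSubgroup,
        ∀ (n : ℕ) (hn : 0 < n) (P : torsionSub ((E.baseChange (AlgebraicClosure k)).toAffine.Point) n),
          e n hn (torsionGal E γ n P) = A n hn • e n hn P) ∧
    (∀ (n : ℕ) (hn : 0 < n), ∀ A ∈ SL2Plus n,
      ∃ γ ∈ K.fixingSubgroup,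
        ∀ P : torsionSub ((E.baseChange (AlgebraicClosure k)).toAffine.Point) n,
          e n hn (torsionGal E γ n P) = A • e n hn P) := by
  have mem_fixingSubgroup (A : ∀ n : ℕ, 0 < n → SpecialLinearGroup (Fin 2) (ZMod n))
      (γ : AlgebraicClosure k ≃ₐ[k] AlgebraicClosure k)
      (hγ : ∀ n hn P, e n hn (torsionGal E γ n P) = A n hn • e n hn P) :
      γ ∈ K.fixingSubgroup := by
    refine IntermediateField.fixingSubgroup_le hK
      (IntermediateField.mem_fixingSubgroup_adjoin fun ζ ⟨m, hm, hζm⟩ => ?_)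
    have hζ := IsPrimitiveRoot.orderOf ζ
    have hpos : 0 < orderOf ζ :=
      orderOf_pos_iff.mpr (isOfFinOrder_iff_pow_eq_one.mpr ⟨m, hm, hζm⟩)
    have hγζ := hdet γ _ hpos _ (hγ _ hpos) ζ hζ
    rwa [Matrix.SpecialLinearGroup.det_coe, hζ.pow_val_one] at hγζ
  refine ⟨fun A hA hA' => ?_, fun n hn A hA => ?_⟩
  · obtain ⟨γ, hγ⟩ := hρ A hA hA'
    exact ⟨γ, mem_fixingSubgroup A γ hγ, hγ⟩
  · obtain ⟨M, rfl, hM⟩ := exists_lift_signChar_eq_one hn hA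
    obtain ⟨γ, hγ⟩ := hρ (fun m _ => SpecialLinearGroup.map (Int.castRingHom (ZMod m)) M)
      (fun _ _ h _ _ => SpecialLinearGroup.map_castHom_map_intCast h M)
      (fun m _ => map_intCast_mem_SL2Plus hM m)
    exact ⟨γ, mem_fixingSubgroup _ γ hγ, hγ n hn⟩

open Matrix in
/-- let `E` be an elliptic curve over a field `k` of characteristic zero whose
full torsion Galois representation `ρ : Γ_k → GL₂(ẑ)` (encoded by compatible bases `e n` of the
`n`-torsion of `E(k̄)`) has image containing `SL₂⁺(ẑ)` (encoded by: every compatible system of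
elements of `SL₂⁺(ℤ/n)` is realised by some `γ ∈ Γ_k`), and suppose `det ∘ ρ` is the cyclotomic
character.  Then for any intermediate field `k ⊆ K ⊆ k^cyc` one has `SL₂⁺(ẑ) ⊆ ρ(Γ_K)`; in
particular `SL₂⁺(ℤ/n) ⊆ ρ_n(Γ_K)` for every `n > 0`. -/
theorem stmt_12 {k : Type*} [Field k] [CharZero k] (E : WeierstrassCurve k) (hΔ : E.Δ ≠ 0)
    (e : ∀ n : ℕ, 0 < n → (torsionSub ((E.baseChange (AlgebraicClosure k)).toAffine.Point) n ≃+ (Fin 2 → ZMod n)))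
    (hcompat : ∀ (m n : ℕ) (h : m ∣ n) (hm : 0 < m) (hn : 0 < n)
      (P : torsionSub ((E.baseChange (AlgebraicClosure k)).toAffine.Point) n),
        e m hm (torsionMul h P) = fun i => ZMod.castHom h (ZMod m) (e n hn P i))
    (hρ : ∀ A : ∀ n : ℕ, 0 < n → SpecialLinearGroup (Fin 2) (ZMod n),
      (∀ (m n : ℕ) (h : m ∣ n) (hm : 0 < m) (hn : 0 < n),
        SpecialLinearGroup.map (ZMod.castHom h (ZMod m)) (A n hn) = A m hm) →
      (∀ (n : ℕ) (hn : 0 < n), A n hn ∈ SL2Plus n) →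
      ∃ γ : AlgebraicClosure k ≃ₐ[k] AlgebraicClosure k,
        ∀ (n : ℕ) (hn : 0 < n) (P : torsionSub ((E.baseChange (AlgebraicClosure k)).toAffine.Point) n),
          e n hn (torsionGal E γ n P) = A n hn • e n hn P)
    (hdet : ∀ (γ : AlgebraicClosure k ≃ₐ[k] AlgebraicClosure k) (n : ℕ) (hn : 0 < n)
      (B : Matrix (Fin 2) (Fin 2) (ZMod n)),
      (∀ P : torsionSub ((E.baseChange (AlgebraicClosure k)).toAffine.Point) n,
        e n hn (torsionGal E γ n P) = B.mulVec (e n hn P)) →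
      ∀ ζ : AlgebraicClosure k, IsPrimitiveRoot ζ n → γ ζ = ζ ^ B.det.val)
    (K : IntermediateField k (AlgebraicClosure k))
    (hK : K ≤ IntermediateField.adjoin k
      {x : AlgebraicClosure k | ∃ n : ℕ, 0 < n ∧ x ^ n = 1}) :
    (∀ A : ∀ n : ℕ, 0 < n → SpecialLinearGroup (Fin 2) (ZMod n),
      (∀ (m n : ℕ) (h : m ∣ n) (hm : 0 < m) (hn : 0 < n),
        SpecialLinearGroup.map (ZMod.castHom h (ZMod m)) (A n hn) = A m hm) →
      (∀ (n : ℕ) (hn : 0 < n), A n hn ∈ SL2Plus n) →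
      ∃ γ ∈ K.fixingSubgroup,
        ∀ (n : ℕ) (hn : 0 < n) (P : torsionSub ((E.baseChange (AlgebraicClosure k)).toAffine.Point) n),
          e n hn (torsionGal E γ n P) = A n hn • e n hn P) ∧
    (∀ (n : ℕ) (hn : 0 < n), ∀ A ∈ SL2Plus n,
      ∃ γ ∈ K.fixingSubgroup,
        ∀ P : torsionSub ((E.baseChange (AlgebraicClosure k)).toAffine.Point) n,
          e n hn (torsionGal E γ n P) = A • e n hn P) :=
  stmt_12_general E e hρ hdet K hK
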